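/- arXiv:2112.08308 — 2 statements merged into one kernel-verified Lean document; each statement's English description precedes it below -/
import Mathlib

section
/- If M is an n×n P-matrix, then the linear complementarity problem: find x with x ≥ 0, Mx + q ≥ 0, and xᵀ(Mx + q) = 0, has at most one solution for every q ∈ ℝⁿ. In particular, for a P-matrix M, the map x ↦ solution of LCP(M,q) is single-valued where defined. (Prove uniqueness: if x and y both solve LCP(M,q), then x = y.) -/
open Matrix Finset

section Aux

variable {m : Type*} [DecidableEq m] [Fintype m]

/-- The determinant of the matrix whose rows are those of `A` on `T` and standard basis
vectors off `T` equals the principal minor of `A` on `T`. -/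
lemma det_piecewise_single (A : Matrix m m ℝ) (T : Finset m) :
    (Matrix.of (T.piecewise (fun i => A i) (fun i => Pi.single i (1 : ℝ)))).det
      = (A.submatrix (fun i : T => (i : m)) (fun j : T => (j : m))).det := by
  classical
  let e : { x // x ∈ T } ⊕ { x // ¬ x ∈ T } ≃ m := Equiv.sumCompl (· ∈ T)
  rw [← Matrix.det_submatrix_equiv_self e]
  have hmat : (Matrix.of (T.piecewise (fun i => A i)
      (fun i => Pi.single i (1 : ℝ)))).submatrix e e
      = Matrix.fromBlocks (A.submatrix (fun i : T => (i : m)) (fun j : T => (j : m)))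
          (A.submatrix (fun i : T => (i : m)) (fun j : { x // ¬ x ∈ T } => (j : m)))
          0 1 := by
    ext i j
    cases i with
    | inl i =>
      cases j with
      | inl j =>
        simp [e, Matrix.submatrix_apply, T.piecewise_eq_of_mem _ _ i.2]
      | inr j =>
        simp [e, Matrix.submatrix_apply, T.piecewise_eq_of_mem _ _ i.2]
    | inr i =>
      cases j with
      | inl j =>
        have : ((j : m) : m) ≠ (i : m) := fun h => i.2 (h ▸ j.2)
        simp [e, Matrix.submatrix_apply, T.piecewise_eq_of_notMem _ _ i.2,
          Pi.single_apply, this]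
      | inr j =>
        simp [e, Matrix.submatrix_apply, T.piecewise_eq_of_notMem _ _ i.2,
          Pi.single_apply, Matrix.one_apply, Subtype.ext_iff, eq_comm]
  rw [hmat, Matrix.det_fromBlocks_zero₂₁, Matrix.det_one, mul_one]

/-- Expansion of `det (A + diagonal d)` as a sum of principal minors. -/
lemma det_add_diagonal (A : Matrix m m ℝ) (d : m → ℝ) :
    (A + Matrix.diagonal d).det
      = ∑ T : Finset m, (∏ i ∈ Tᶜ, d i) *
          (A.submatrix (fun i : T => (i : m)) (fun j : T => (j : m))).det := by
  classical
  let E : m → m → ℝ := fun i => Pi.single i 1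
  let b : m → m → ℝ := fun i => d i • E i
  let a : m → m → ℝ := fun i => A i
  have hrows : (A + Matrix.diagonal d) = Matrix.of (a + b) := by
    ext i j
    by_cases h : i = j <;>
      simp [a, b, E, Matrix.diagonal_apply, Pi.single_apply, h, eq_comm]
  rw [hrows]
  have key : (Matrix.of (a + b)).det
      = (Matrix.detRowAlternating : (m → ℝ) [⋀^m]→ₗ[ℝ] ℝ).toMultilinearMap (a + b) := rfl
  rw [key, MultilinearMap.map_add_univ]
  refine Finset.sum_congr rfl fun T _ => ?_
  have hpiece : T.piecewise a b = Tᶜ.piecewise (fun i => d i • (T.piecewise a E) i)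
      (T.piecewise a E) := by
    funext i
    by_cases h : i ∈ T
    · rw [T.piecewise_eq_of_mem _ _ h, Tᶜ.piecewise_eq_of_notMem _ _ (by simp [h]),
        T.piecewise_eq_of_mem _ _ h]
    · rw [T.piecewise_eq_of_notMem _ _ h, Tᶜ.piecewise_eq_of_mem _ _ (by simp [h]),
        T.piecewise_eq_of_notMem _ _ h]
  rw [hpiece, MultilinearMap.map_piecewise_smul]
  have key2 : (Matrix.detRowAlternating : (m → ℝ) [⋀^m]→ₗ[ℝ] ℝ).toMultilinearMap
      (T.piecewise a E)
      = (Matrix.of (T.piecewise (fun i => A i) (fun i => Pi.single i (1 : ℝ)))).det := rfl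
  rw [key2, det_piecewise_single, smul_eq_mul]

/-- If all principal minors of `A` are positive and `d` is nonnegative, then
`det (A + diagonal d) > 0`. -/
lemma det_add_diagonal_pos (A : Matrix m m ℝ)
    (hA : ∀ T : Finset m,
      0 < (A.submatrix (fun i : T => (i : m)) (fun j : T => (j : m))).det)
    (d : m → ℝ) (hd : ∀ i, 0 ≤ d i) :
    0 < (A + Matrix.diagonal d).det := by
  classical
  rw [det_add_diagonal]
  refine Finset.sum_pos' (fun T _ => ?_) ⟨Finset.univ, Finset.mem_univ _, ?_⟩
  · exact mul_nonneg (Finset.prod_nonneg fun i _ => hd i) (hA T).le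
  · simpa using hA Finset.univ

end Aux

/-- If `M` is a P-matrix, then for every `q` the linear complementarity
problem `LCP(M, q)` has at most one solution. -/
theorem pmatrix_lcp_unique (n : ℕ) (M : Matrix (Fin n) (Fin n) ℝ)
    (hP : ∀ s : Finset (Fin n), s.Nonempty →
        0 < (M.submatrix (fun i : s => (i : Fin n)) (fun j : s => (j : Fin n))).det)
    (q x y : Fin n → ℝ)
    (hx : (∀ i, 0 ≤ x i) ∧ (∀ i, 0 ≤ M.mulVec x i + q i) ∧
        ∀ i, x i * (M.mulVec x i + q i) = 0)
    (hy : (∀ i, 0 ≤ y i) ∧ (∀ i, 0 ≤ M.mulVec y i + q i) ∧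
        ∀ i, y i * (M.mulVec y i + q i) = 0) :
    x = y := by
  classical
  by_contra hne
  set z : Fin n → ℝ := x - y with hzdef
  have hzne : z ≠ 0 := sub_ne_zero.mpr hne
  obtain ⟨i0, hi0⟩ : ∃ i, z i ≠ 0 := Function.ne_iff.mp hzne
  -- the key sign condition
  have hsign : ∀ i, z i * M.mulVec z i ≤ 0 := by
    intro i
    have hMz : M.mulVec z i = M.mulVec x i - M.mulVec y i := by
      rw [hzdef, Matrix.mulVec_sub, Pi.sub_apply]
    have h1 := hx.1 i
    have h2 := hx.2.1 i
    have h3 := hx.2.2 i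
    have h4 := hy.1 i
    have h5 := hy.2.1 i
    have h6 := hy.2.2 i
    have hzi : z i = x i - y i := rfl
    nlinarith [mul_nonneg h1 h5, mul_nonneg h4 h2]
  set s : Finset (Fin n) := Finset.univ.filter (fun i => z i ≠ 0) with hsdef
  have hmem : ∀ i : Fin n, i ∈ s ↔ z i ≠ 0 := by intro i; simp [hsdef]
  have hzeroOff : ∀ i : Fin n, i ∉ s → z i = 0 := by
    intro i hi; by_contra h; exact hi ((hmem i).mpr h)
  set A : Matrix s s ℝ := M.submatrix (fun i : s => (i : Fin n)) (fun j : s => (j : Fin n))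
    with hAdef
  set d : s → ℝ := fun i => -(M.mulVec z (i : Fin n)) / z (i : Fin n) with hddef
  have hzs : ∀ i : s, z (i : Fin n) ≠ 0 := fun i => (hmem _).mp i.2
  have hd : ∀ i : s, 0 ≤ d i := by
    intro i
    have hzi := hzs i
    have : d i = -(z (i : Fin n) * M.mulVec z (i : Fin n)) / (z (i:Fin n) * z (i:Fin n)) := by
      rw [hddef]; field_simp
    rw [this]
    apply div_nonneg (by linarith [hsign (i : Fin n)]) (mul_self_nonneg _)
  -- the restricted vector is in the kernel
  have hker : (A + Matrix.diagonal d).mulVec (fun i : s => z (i : Fin n)) = 0 := by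
    funext i
    have hsum : A.mulVec (fun j : s => z (j : Fin n)) i = M.mulVec z (i : Fin n) := by
      rw [hAdef]
      simp only [Matrix.mulVec, dotProduct, Matrix.submatrix_apply]
      rw [Finset.sum_coe_sort s (fun j => M (i : Fin n) j * z j)]
      refine Finset.sum_subset (Finset.subset_univ s) fun j _ hj => ?_
      rw [hzeroOff j hj, mul_zero]
    rw [Matrix.add_mulVec, Pi.add_apply, hsum, Matrix.mulVec_diagonal, hddef]
    have hzi := hzs i
    field_simp
    simp
  have hdet0 : (A + Matrix.diagonal d).det = 0 := by
    rw [← Matrix.exists_mulVec_eq_zero_iff]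
    refine ⟨fun i : s => z (i : Fin n), ?_, hker⟩
    intro h
    exact hzs ⟨i0, (hmem i0).mpr hi0⟩ (congrFun h ⟨i0, (hmem i0).mpr hi0⟩)
  have hApos : ∀ T : Finset s,
      0 < (A.submatrix (fun i : T => (i : s)) (fun j : T => (j : s))).det := by
    intro T
    rcases T.eq_empty_or_nonempty with rfl | hT
    · haveI : IsEmpty ((∅ : Finset s) : Finset s) := by simp; exact ⟨fun x => x.2⟩
      rw [Matrix.det_isEmpty]; norm_num
    · set s' : Finset (Fin n) := T.image (fun i : s => (i : Fin n)) with hs'def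
      have hs'ne : s'.Nonempty := hT.image _
      have hPmain := hP s' hs'ne
      -- equivalence between T and s'
      have hinj : Function.Injective (fun i : s => (i : Fin n)) := Subtype.coe_injective
      let f : T → s' := fun i => ⟨((i : s) : Fin n), by
        rw [hs'def]; exact Finset.mem_image_of_mem _ i.2⟩
      have hfbij : Function.Bijective f := by
        constructor
        · intro a b hab
          have h1 := congrArg Subtype.val hab
          exact Subtype.ext (Subtype.ext h1)
        · rintro ⟨v, hv⟩
          rw [hs'def, Finset.mem_image] at hv
          obtain ⟨a, ha, rfl⟩ := hv
          exact ⟨⟨a, ha⟩, rfl⟩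
      let e : T ≃ s' := Equiv.ofBijective f hfbij
      have : (A.submatrix (fun i : T => (i : s)) (fun j : T => (j : s)))
          = (M.submatrix (fun i : s' => (i : Fin n)) (fun j : s' => (j : Fin n))).submatrix
              e e := by
        ext i j
        simp [hAdef, e, f, Matrix.submatrix_apply, Equiv.ofBijective_apply]
      rw [this, Matrix.det_submatrix_equiv_self]
      exact hPmain
  exact absurd hdet0 (ne_of_gt (det_add_diagonal_pos A hApos d hd))
end

section
/- A real square matrix M is a P-matrix if and only if for every nonzero vector z ∈ ℝⁿ there exists an index i such that zᵢ(Mz)ᵢ > 0 (i.e., M does not reverse the sign of any nonzero vector). -/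
open Matrix Finset

/-- Determinant of a matrix whose `i`-th row is replaced by the `i`-th standard
basis vector equals the determinant of the principal minor removing `i`. -/
lemma det_updateRow_pisingle {m : ℕ} (B : Matrix (Fin (m+1)) (Fin (m+1)) ℝ) (i : Fin (m+1)) :
    (B.updateRow i (Pi.single i 1)).det = (B.submatrix i.succAbove i.succAbove).det := by
  rw [Matrix.det_succ_row _ i]
  rw [Finset.sum_eq_single i]
  · rw [Matrix.updateRow_self]
    simp only [Pi.single_eq_same, mul_one]
    rw [Matrix.submatrix_updateRow_succAbove]
    have : ((-1 : ℝ)) ^ ((i : ℕ) + (i : ℕ)) = 1 := Even.neg_one_pow ⟨i, rfl⟩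
    rw [this, one_mul]
  · intro j _ hj
    rw [Matrix.updateRow_self, Pi.single_eq_of_ne hj]
    ring
  · intro h; exact absurd (Finset.mem_univ i) h

/-- Positivity of principal minors transfers to submatrices along injective maps. -/
lemma det_submatrix_pos {n : ℕ} {M : Matrix (Fin n) (Fin n) ℝ}
    (hM : ∀ s : Finset (Fin n), s.Nonempty →
        0 < (M.submatrix (fun i : s => (i : Fin n)) (fun j : s => (j : Fin n))).det)
    {ι : Type} [Fintype ι] [DecidableEq ι] [Nonempty ι] {f : ι → Fin n}
    (hf : Function.Injective f) :
    0 < (M.submatrix f f).det := by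
  set s : Finset (Fin n) := Finset.univ.image f with hs
  have hsne : s.Nonempty :=
    ⟨f (Classical.arbitrary ι), Finset.mem_image_of_mem f (Finset.mem_univ _)⟩
  have hmem : ∀ a : ι, f a ∈ s := fun a => Finset.mem_image_of_mem f (Finset.mem_univ _)
  let g : ι → {x // x ∈ s} := fun a => ⟨f a, hmem a⟩
  have hg : Function.Bijective g := by
    constructor
    · intro a b hab
      exact hf (congrArg Subtype.val hab)
    · rintro ⟨x, hx⟩
      rcases Finset.mem_image.1 hx with ⟨a, -, ha⟩
      exact ⟨a, Subtype.ext ha⟩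
  let e : ι ≃ {x // x ∈ s} := Equiv.ofBijective g hg
  have key : M.submatrix f f =
      (M.submatrix (fun i : s => (i : Fin n)) (fun j : s => (j : Fin n))).submatrix e e := by
    ext a b
    rfl
  rw [key, Matrix.det_submatrix_equiv_self]
  exact hM s hsne

/-- If all principal minors of `A` are positive, then `det (A + D) > 0` for any
nonnegative diagonal `D`. -/
lemma det_add_diag_pos : ∀ (m : ℕ) (A : Matrix (Fin m) (Fin m) ℝ),
    (∀ s : Finset (Fin m), s.Nonempty →
        0 < (A.submatrix (fun i : s => (i : Fin m)) (fun j : s => (j : Fin m))).det) →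
    ∀ d : Fin m → ℝ, (∀ i, 0 ≤ d i) → 0 < (A + Matrix.diagonal d).det := by
  intro m
  induction m with
  | zero =>
    intro A _ d _
    simp [Matrix.det_isEmpty]
  | succ m ih =>
    intro A hA
    suffices h : ∀ (k : ℕ) (d : Fin (m+1) → ℝ), (∀ i, 0 ≤ d i) →
        (Finset.univ.filter (fun i => d i ≠ 0)).card ≤ k →
        0 < (A + Matrix.diagonal d).det by
      intro d hd
      exact h _ d hd le_rfl
    intro k
    induction k with
    | zero =>
      intro d hd hc
      have hd0 : d = 0 := by
        funext i
        show d i = (0 : ℝ)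
        by_contra hne
        have hmem : i ∈ Finset.univ.filter (fun i => d i ≠ 0) :=
          Finset.mem_filter.2 ⟨Finset.mem_univ _, hne⟩
        have := Finset.card_pos.2 ⟨i, hmem⟩
        omega
      rw [hd0, show Matrix.diagonal (0 : Fin (m+1) → ℝ) = (0 : Matrix _ _ ℝ) from by
        ext a b; simp [Matrix.diagonal_apply], add_zero]
      have := det_submatrix_pos hA (f := (id : Fin (m+1) → Fin (m+1))) Function.injective_id
      rwa [Matrix.submatrix_id_id] at this
    | succ k ihk =>
      intro d hd hc
      by_cases hck : (Finset.univ.filter (fun i => d i ≠ 0)).card ≤ k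
      · exact ihk d hd hck
      · have : (Finset.univ.filter (fun i => d i ≠ 0)).Nonempty := by
          rw [← Finset.card_pos]; omega
        obtain ⟨i, hi⟩ := this
        have hdi : d i ≠ 0 := (Finset.mem_filter.1 hi).2
        have hdipos : 0 < d i := lt_of_le_of_ne (hd i) (Ne.symm hdi)
        set d' : Fin (m+1) → ℝ := Function.update d i 0 with hd'def
        have hd'nn : ∀ j, 0 ≤ d' j := by
          intro j
          rcases eq_or_ne j i with hj | hj
          · subst hj; rw [hd'def, Function.update_self]
          · rw [hd'def, Function.update_of_ne hj]; exact hd j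
        set B' : Matrix (Fin (m+1)) (Fin (m+1)) ℝ := A + Matrix.diagonal d' with hB'
        have hsplit : A + Matrix.diagonal d =
            B'.updateRow i (B' i + d i • (Pi.single i 1 : Fin (m+1) → ℝ)) := by
          ext r j
          by_cases hr : r = i
          · subst hr
            rw [Matrix.updateRow_self]
            simp only [Matrix.add_apply, Pi.add_apply, Pi.smul_apply, smul_eq_mul, hB']
            by_cases hj : j = r
            · subst hj
              rw [Matrix.diagonal_apply_eq, Matrix.diagonal_apply_eq, Pi.single_eq_same,
                hd'def, Function.update_self]
              ring
            · rw [Matrix.diagonal_apply_ne _ (Ne.symm hj), Matrix.diagonal_apply_ne _ (Ne.symm hj),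
                Pi.single_eq_of_ne hj]
              ring
          · rw [Matrix.updateRow_ne hr]
            simp only [Matrix.add_apply, hB']
            congr 1
            by_cases hj : r = j
            · subst hj
              rw [Matrix.diagonal_apply_eq, Matrix.diagonal_apply_eq, hd'def,
                Function.update_of_ne hr]
            · rw [Matrix.diagonal_apply_ne _ hj, Matrix.diagonal_apply_ne _ hj]
        have hdet : (A + Matrix.diagonal d).det =
            B'.det + d i * (B'.updateRow i (Pi.single i 1)).det := by
          rw [hsplit, Matrix.det_updateRow_add, Matrix.updateRow_eq_self,
            Matrix.det_updateRow_smul]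
        rw [hdet, det_updateRow_pisingle]
        -- first term positive by inner induction
        have hsub : Finset.univ.filter (fun j => d' j ≠ 0) ⊆
            (Finset.univ.filter (fun j => d j ≠ 0)).erase i := by
          intro j hj
          have hj' := (Finset.mem_filter.1 hj).2
          have hji : j ≠ i := by
            intro h; subst h; simp [hd'def] at hj'
          refine Finset.mem_erase.2 ⟨hji, Finset.mem_filter.2 ⟨Finset.mem_univ _, ?_⟩⟩
          rwa [hd'def, Function.update_of_ne hji] at hj'
        have hcard : (Finset.univ.filter (fun j => d' j ≠ 0)).card ≤ k := by
          have h1 := Finset.card_le_card hsub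
          have h2 := Finset.card_erase_of_mem hi
          omega
        have hfirst : 0 < B'.det := ihk d' hd'nn hcard
        -- second term positive by outer induction
        have hBsub : B'.submatrix i.succAbove i.succAbove =
            A.submatrix i.succAbove i.succAbove + Matrix.diagonal (d' ∘ i.succAbove) := by
          rw [hB']
          simp only [Matrix.submatrix_add, Pi.add_apply,
            Matrix.submatrix_diagonal _ _ Fin.succAbove_right_injective]
        have hA' : ∀ s : Finset (Fin m), s.Nonempty →
            0 < ((A.submatrix i.succAbove i.succAbove).submatrix
                (fun i : s => (i : Fin m)) (fun j : s => (j : Fin m))).det := by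
          intro t ht
          rw [Matrix.submatrix_submatrix]
          have : Nonempty {x // x ∈ t} := Finset.nonempty_coe_sort.2 ht
          exact det_submatrix_pos hA
            (Function.Injective.comp Fin.succAbove_right_injective Subtype.val_injective)
        have hsecond : 0 < (A.submatrix i.succAbove i.succAbove +
            Matrix.diagonal (d' ∘ i.succAbove)).det :=
          ih (A.submatrix i.succAbove i.succAbove) hA' (d' ∘ i.succAbove)
            (fun j => hd'nn _)
        rw [hBsub]
        positivity

/-- A matrix that reverses the sign of no nonzero vector has positive determinant. -/
lemma det_pos_of_no_reversal {ι : Type} [Fintype ι] [DecidableEq ι] (B : Matrix ι ι ℝ)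
    (hB : ∀ w : ι → ℝ, w ≠ 0 → ∃ i, 0 < w i * B.mulVec w i) : 0 < B.det := by
  set g : ℝ → ℝ := fun t => (t • B + (1 - t) • (1 : Matrix ι ι ℝ)).det with hg
  have hgc : Continuous g := by
    apply Continuous.matrix_det
    fun_prop
  have hgne : ∀ t ∈ Set.Icc (0 : ℝ) 1, g t ≠ 0 := by
    rintro t ⟨ht0, ht1⟩ hgt
    obtain ⟨w, hw, hw0⟩ := Matrix.exists_mulVec_eq_zero_iff.2 hgt
    obtain ⟨i, hi⟩ := hB w hw
    have hwi : w i ≠ 0 := by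
      intro h
      rw [h, zero_mul] at hi
      exact lt_irrefl 0 hi
    have heq : t * (B.mulVec w i) + (1 - t) * w i = 0 := by
      have := congrFun hw0 i
      simpa [Matrix.add_mulVec, Matrix.smul_mulVec, Matrix.one_mulVec] using this
    have h2 : t * (w i * B.mulVec w i) + (1 - t) * (w i * w i) = 0 := by
      linear_combination w i * heq
    rcases eq_or_lt_of_le ht0 with h0 | h0
    · rw [← h0] at h2
      simp at h2
      exact hwi h2
    · have hp1 : 0 < t * (w i * B.mulVec w i) := mul_pos h0 hi
      have hp2 : 0 ≤ (1 - t) * (w i * w i) :=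
        mul_nonneg (by linarith) (mul_self_nonneg _)
      linarith
  have hg0 : g 0 = 1 := by simp [hg]
  by_contra hdet
  push_neg at hdet
  have hg1 : g 1 ≤ 0 := by simpa [hg] using hdet
  have : (0 : ℝ) ∈ g '' Set.Icc 0 1 := by
    apply intermediate_value_Icc' (by norm_num : (0:ℝ) ≤ 1) hgc.continuousOn
    constructor
    · exact hg1
    · rw [hg0]; norm_num
  obtain ⟨t, ht, hgt⟩ := this
  exact hgne t ht hgt

/-- A real square matrix is a P-matrix iff it reverses the sign of no nonzero
vector: for every `z ≠ 0` there is an index `i` with `zᵢ (Mz)ᵢ > 0`. -/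
theorem pmatrix_iff_no_sign_reversal (n : ℕ) (M : Matrix (Fin n) (Fin n) ℝ) :
    (∀ s : Finset (Fin n), s.Nonempty →
        0 < (M.submatrix (fun i : s => (i : Fin n)) (fun j : s => (j : Fin n))).det) ↔
      ∀ z : Fin n → ℝ, z ≠ 0 → ∃ i, 0 < z i * M.mulVec z i := by
  constructor
  · -- P-matrix ⇒ no sign reversal
    intro hM z hz
    by_contra hcon
    push_neg at hcon
    set s : Finset (Fin n) := Finset.univ.filter (fun i => z i ≠ 0) with hs
    have hsmem : ∀ x, x ∈ s ↔ z x ≠ 0 := by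
      intro x; simp [hs]
    have hsne : s.Nonempty := by
      obtain ⟨i, hi⟩ := Function.ne_iff.1 hz
      exact ⟨i, (hsmem i).2 hi⟩
    set f : Fin s.card → Fin n := fun j => s.orderEmbOfFin rfl j with hf
    have hfinj : Function.Injective f := fun a b h => (s.orderEmbOfFin rfl).injective h
    have hfz : ∀ j, z (f j) ≠ 0 := by
      intro j
      exact (hsmem _).1 (s.orderEmbOfFin_mem rfl j)
    have hcardpos : 0 < s.card := Finset.card_pos.2 hsne
    set A : Matrix (Fin s.card) (Fin s.card) ℝ := M.submatrix f f with hAdef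
    have hA : ∀ t : Finset (Fin s.card), t.Nonempty →
        0 < (A.submatrix (fun i : t => (i : Fin s.card)) (fun j : t => (j : Fin s.card))).det := by
      intro t ht
      rw [hAdef, Matrix.submatrix_submatrix]
      have : Nonempty {x // x ∈ t} := Finset.nonempty_coe_sort.2 ht
      exact det_submatrix_pos hM (Function.Injective.comp hfinj Subtype.val_injective)
    set d : Fin s.card → ℝ := fun j => -(M.mulVec z (f j)) / z (f j) with hd
    have hdnn : ∀ j, 0 ≤ d j := by
      intro j
      have h1 : z (f j) * M.mulVec z (f j) ≤ 0 := hcon (f j)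
      have h2 : z (f j) ≠ 0 := hfz j
      have h3 : d j = -(z (f j) * M.mulVec z (f j)) / (z (f j))^2 := by
        rw [hd]
        field_simp
      rw [h3]
      apply div_nonneg (by linarith) (by positivity)
    have hdetpos := det_add_diag_pos s.card A hA d hdnn
    -- but A + diagonal d kills a nonzero vector
    set w : Fin s.card → ℝ := fun j => z (f j) with hw
    have hwne : w ≠ 0 := by
      have : Nonempty (Fin s.card) := ⟨⟨0, hcardpos⟩⟩
      intro h
      exact hfz (Classical.arbitrary _) (congrFun h _)
    have himg : Finset.univ.image f = s := by
      ext x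
      simp only [Finset.mem_image, Finset.mem_univ, true_and]
      constructor
      · rintro ⟨a, rfl⟩
        exact s.orderEmbOfFin_mem rfl a
      · intro hx
        have : x ∈ Set.range (s.orderEmbOfFin rfl) := by
          rw [Finset.range_orderEmbOfFin]
          exact hx
        obtain ⟨a, ha⟩ := this
        exact ⟨a, ha⟩
    have hmv : (A + Matrix.diagonal d).mulVec w = 0 := by
      funext j
      have hsum : A.mulVec w j = M.mulVec z (f j) := by
        rw [hAdef, hw, Matrix.mulVec, Matrix.mulVec]
        simp only [dotProduct, Matrix.submatrix_apply]
        have h1 : ∑ k : Fin s.card, M (f j) (f k) * z (f k) =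
            ∑ x ∈ Finset.univ.image f, M (f j) x * z x := by
          rw [Finset.sum_image (fun a _ b _ h => hfinj h)]
        rw [h1, himg]
        apply Finset.sum_subset (Finset.subset_univ s)
        intro x _ hx
        have : z x = 0 := by
          by_contra hzx
          exact hx ((hsmem x).2 hzx)
        rw [this, mul_zero]
      have : (A + Matrix.diagonal d).mulVec w j = A.mulVec w j + d j * w j := by
        rw [Matrix.add_mulVec]
        simp [Matrix.mulVec_diagonal]
      rw [this, hsum, hd, hw]
      simp only [Pi.zero_apply]
      rw [div_mul_cancel₀ _ (hfz j)]
      ring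
    have : (A + Matrix.diagonal d).det = 0 :=
      Matrix.exists_mulVec_eq_zero_iff.1 ⟨w, hwne, hmv⟩
    rw [this] at hdetpos
    exact lt_irrefl 0 hdetpos
  · -- no sign reversal ⇒ P-matrix
    intro hM s hsne
    apply det_pos_of_no_reversal
    intro w hw
    set z : Fin n → ℝ := fun i => if h : i ∈ s then w ⟨i, h⟩ else 0 with hz
    have hzne : z ≠ 0 := by
      obtain ⟨j, hj⟩ := Function.ne_iff.1 hw
      intro h
      apply hj
      have := congrFun h (j : Fin n)
      simpa [hz, j.2] using this
    obtain ⟨i, hi⟩ := hM z hzne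
    have hzi : z i ≠ 0 := by
      intro h
      rw [h, zero_mul] at hi
      exact lt_irrefl 0 hi
    have his : i ∈ s := by
      by_contra h
      exact hzi (by simp [hz, h])
    refine ⟨⟨i, his⟩, ?_⟩
    have hzival : z i = w ⟨i, his⟩ := by simp [hz, his]
    have hmv : (M.submatrix (fun i : s => (i : Fin n)) (fun j : s => (j : Fin n))).mulVec w
        ⟨i, his⟩ = M.mulVec z i := by
      have h1 : ∀ x : {x // x ∈ s}, w x = z (x : Fin n) := by
        intro x
        simp [hz, x.2]
      rw [Matrix.mulVec, Matrix.mulVec]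
      simp only [dotProduct, Matrix.submatrix_apply]
      calc ∑ x : {x // x ∈ s}, M i (x : Fin n) * w x
          = ∑ x : {x // x ∈ s}, M i (x : Fin n) * z (x : Fin n) :=
            Finset.sum_congr rfl (fun x _ => by rw [h1])
        _ = ∑ x ∈ s, M i x * z x := Finset.sum_coe_sort s (fun x => M i x * z x)
        _ = ∑ x, M i x * z x := Finset.sum_subset (Finset.subset_univ s) (fun x _ hx => by
              have : z x = 0 := by simp [hz, hx]
              rw [this, mul_zero])
    rw [hmv, ← hzival]
    exact hi
end
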